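/- Every tensor A ∈ ℂ^{n1×n2×n3} admits a tensor singular value decomposition A = U * S * V^T with U ∈ ℂ^{n1×n1×n3} and V ∈ ℂ^{n2×n2×n3} orthogonal tensors and S ∈ ℂ^{n1×n2×n3} f-diagonal (each frontal slice is a diagonal matrix). -/

import Mathlib

open Finset Matrix

/-- Block circulant matrix of a tensor given by its frontal slices:
the (p,q) block is the slice with index (p - q) mod n3. -/
noncomputable def bcirc {n1 n2 n3 : ℕ} [NeZero n3]
    (A : Fin n3 → Matrix (Fin n1) (Fin n2) ℂ) :
    Matrix (Fin n3 × Fin n1) (Fin n3 × Fin n2) ℂ :=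
  fun p q => A (p.1 - q.1) p.2 q.2

/-- Unfold operator: stacks the frontal slices of a tensor vertically. -/
def unfold {n2 n3 n4 : ℕ} (B : Fin n3 → Matrix (Fin n2) (Fin n4) ℂ) :
    Matrix (Fin n3 × Fin n2) (Fin n4) ℂ :=
  fun p j => B p.1 p.2 j

/-- t-product A * B = fold(bcirc(A) · unfold(B)), given by its frontal slices. -/
noncomputable def tProd {n1 n2 n3 n4 : ℕ} [NeZero n3]
    (A : Fin n3 → Matrix (Fin n1) (Fin n2) ℂ)
    (B : Fin n3 → Matrix (Fin n2) (Fin n4) ℂ) :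
    Fin n3 → Matrix (Fin n1) (Fin n4) ℂ :=
  fun t => fun i j => (bcirc A * unfold B) (t, i) j

/-- Tensor conjugate transpose: conjugate-transpose each frontal slice and
reverse the order of slices 2,…,n3 (slice k ↦ slice (-k) mod n3). -/
noncomputable def tTrans {n1 n2 n3 : ℕ} [NeZero n3]
    (A : Fin n3 → Matrix (Fin n1) (Fin n2) ℂ) :
    Fin n3 → Matrix (Fin n2) (Fin n1) ℂ :=
  fun k => (A (-k))ᴴ

/-- The identity tensor: first frontal slice is the identity matrix, others zero. -/
noncomputable def idTensor (n n3 : ℕ) [NeZero n3] :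
    Fin n3 → Matrix (Fin n) (Fin n) ℂ :=
  fun k => if k = 0 then 1 else 0

/-!
The Fourier transform along the tube index diagonalises the t-algebra: it turns the t-product into
the slicewise matrix product (the block circulant matrix is a convolution), the tensor conjugate
transpose into the slicewise conjugate transpose, and the identity tensor into identity slices.
A t-SVD is therefore obtained by taking a matrix SVD of every Fourier slice and transforming back.
The matrix SVD comes from the spectral theorem for `Tᴴ T`: the images under `T` of its orthonormal
eigenvectors are orthogonal, of lengths the singular values, and as these are sorted decreasingly
the nonzero ones occupy the first `rank T ≤ m` positions, where the diagonal of an `m × n` matrix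
can hold them.
-/

open Module InnerProductSpace ZMod

namespace LinearMap

variable {𝕜 E F : Type*} [RCLike 𝕜]
  [NormedAddCommGroup E] [InnerProductSpace 𝕜 E] [FiniteDimensional 𝕜 E]
  [NormedAddCommGroup F] [InnerProductSpace 𝕜 F] [FiniteDimensional 𝕜 F]

noncomputable def rightSingularVector (T : E →ₗ[𝕜] F) {n : ℕ} (hn : finrank 𝕜 E = n) (k : ℕ) :
    E :=
  if h : k < n then T.isSymmetric_adjoint_comp_self.eigenvectorBasis hn ⟨k, h⟩ else 0

theorem inner_apply_rightSingularVector (T : E →ₗ[𝕜] F) {n : ℕ} (hn : finrank 𝕜 E = n)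
    (k l : ℕ) :
    ⟪T (T.rightSingularVector hn k), T (T.rightSingularVector hn l)⟫_𝕜 =
      if k = l then (T.singularValues l : 𝕜) ^ 2 else 0 := by
  have hzero : ∀ i, ¬i < n → T.singularValues i = 0 := fun i hi =>
    T.singularValues_of_finrank_le (hn.trans_le (not_lt.mp hi))
  by_cases hk : k < n
  · by_cases hl : l < n
    · rw [rightSingularVector, rightSingularVector, dif_pos hk, dif_pos hl, ← adjoint_inner_right,
        ← comp_apply, IsSymmetric.apply_eigenvectorBasis, inner_smul_right,
        orthonormal_iff_ite.mp (IsSymmetric.eigenvectorBasis _ hn).orthonormal,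
        ← T.sq_singularValues_fin hn]
      simp
    · simp [rightSingularVector, hl, hzero l hl]
  · simp only [rightSingularVector, dif_neg hk, map_zero, inner_zero_left]
    split_ifs with hkl
    · simp [← hkl, hzero k hk]
    · rfl

theorem lt_finrank_of_singularValues_ne_zero (T : E →ₗ[𝕜] F) {k : ℕ}
    (hk : T.singularValues k ≠ 0) : k < finrank 𝕜 F :=
  (T.singularValues_pos_iff_lt_finrank_range.mp
    ((T.singularValues_pos_iff_ne_zero k).mpr hk)).trans_le (Submodule.finrank_le T.range)

theorem exists_orthonormalBasis_inner_apply_eq_singularValues (T : E →ₗ[𝕜] F) {m n : ℕ}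
    (hm : finrank 𝕜 F = m) (hn : finrank 𝕜 E = n) :
    ∃ (w : OrthonormalBasis (Fin n) 𝕜 E) (u : OrthonormalBasis (Fin m) 𝕜 F),
      ∀ i j, ⟪u i, T (w j)⟫_𝕜 = if (i : ℕ) = j then (T.singularValues j : 𝕜) else 0 := by
  let w := T.isSymmetric_adjoint_comp_self.eigenvectorBasis hn
  let s : Set (Fin m) := {a | T.singularValues a ≠ 0}
  let v : Fin m → F := fun a => (T.singularValues a : 𝕜)⁻¹ • T (T.rightSingularVector hn a)
  have hv : Orthonormal 𝕜 (s.domRestrict v) := by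
    rw [orthonormal_iff_ite]
    rintro ⟨a, ha⟩ ⟨b, -⟩
    simp only [Set.domRestrict_apply, v, inner_smul_left, inner_smul_right,
      inner_apply_rightSingularVector, Subtype.mk.injEq, Fin.val_inj, map_inv₀, RCLike.conj_ofReal]
    split_ifs with hab
    · subst hab
      have ha' : (T.singularValues a : 𝕜) ≠ 0 := RCLike.ofReal_ne_zero.mpr ha
      field_simp
    · simp
  obtain ⟨u, hu⟩ := hv.exists_orthonormalBasis_extension_of_card_eq (by simp [hm])
  refine ⟨w, u, fun i j => ?_⟩
  have hwj : T.rightSingularVector hn j = w j := dif_pos j.2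
  by_cases hj : T.singularValues j = 0
  · have : T (w j) = 0 := by
      rw [← hwj, ← inner_self_eq_zero (𝕜 := 𝕜), inner_apply_rightSingularVector, if_pos rfl, hj]
      simp
    simp [this, hj]
  · set j' : Fin m := ⟨j, hm ▸ T.lt_finrank_of_singularValues_ne_zero hj⟩
    have : T (w j) = (T.singularValues j : 𝕜) • u j' := by
      rw [hu j' hj, smul_smul, mul_inv_cancel₀ (RCLike.ofReal_ne_zero.mpr hj), one_smul, hwj]
    rw [this, inner_smul_right, orthonormal_iff_ite.mp u.orthonormal]
    simp [j', Fin.ext_iff]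

end LinearMap

theorem Matrix.exists_svd {𝕜 : Type*} [RCLike 𝕜] {m n : ℕ} (A : Matrix (Fin m) (Fin n) 𝕜) :
    ∃ (U : Matrix (Fin m) (Fin m) 𝕜) (S : Matrix (Fin m) (Fin n) 𝕜) (V : Matrix (Fin n) (Fin n) 𝕜),
      U ∈ unitaryGroup (Fin m) 𝕜 ∧ V ∈ unitaryGroup (Fin n) 𝕜 ∧
      (∀ (i : Fin m) (j : Fin n), (i : ℕ) ≠ j → S i j = 0) ∧ A = U * S * Vᴴ := by
  obtain ⟨w, u, hwu⟩ := LinearMap.exists_orthonormalBasis_inner_apply_eq_singularValues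
    (toEuclideanLin A) (finrank_euclideanSpace_fin) (finrank_euclideanSpace_fin)
  set en := (EuclideanSpace.basisFun (Fin n) 𝕜).toBasis
  set V := en.toMatrix w.toBasis
  refine ⟨(EuclideanSpace.basisFun (Fin m) 𝕜).toBasis.toMatrix u.toBasis,
    LinearMap.toMatrix w.toBasis u.toBasis (toEuclideanLin A), V,
    (EuclideanSpace.basisFun _ 𝕜).toMatrix_orthonormalBasis_mem_unitary u,
    (EuclideanSpace.basisFun _ 𝕜).toMatrix_orthonormalBasis_mem_unitary w, fun i j hij => ?_, ?_⟩
  · rw [LinearMap.toMatrix_apply, OrthonormalBasis.coe_toBasis_repr_apply,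
      OrthonormalBasis.repr_apply_apply, OrthonormalBasis.coe_toBasis, hwu, if_neg hij]
  · have hVV : Vᴴ * V = 1 :=
      (EuclideanSpace.basisFun _ 𝕜).toMatrix_orthonormalBasis_conjTranspose_mul_self w
    have hV : w.toBasis.toMatrix en = Vᴴ := by
      calc w.toBasis.toMatrix en = Vᴴ * V * w.toBasis.toMatrix en := by rw [hVV, one_mul]
        _ = Vᴴ := by rw [mul_assoc, Basis.toMatrix_mul_toMatrix_flip, mul_one]
    rw [← hV, basis_toMatrix_mul_linearMap_toMatrix_mul_basis_toMatrix,
      toEuclideanLin_eq_toLin_orthonormal, LinearMap.toMatrix_toLin]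

section FinDFT

variable (n : ℕ) [NeZero n] (E : Type*) [AddCommGroup E] [Module ℂ E]

/-- Frequencies are indexed by `ZMod n`, so that `ZMod.dft` and its inverse can be used. -/
noncomputable def finDFT : (Fin n → E) ≃ₗ[ℂ] (ZMod n → E) :=
  (LinearEquiv.funCongrLeft ℂ E (finEquiv n).symm.toEquiv).trans 𝓕

variable {n E}

theorem finDFT_apply (Φ : Fin n → E) (k : ZMod n) :
    finDFT n E Φ k = ∑ t, stdAddChar (-(finEquiv n t * k)) • Φ t :=
  Fintype.sum_equiv (finEquiv n).symm.toEquiv _ _ fun j => by simp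

theorem finDFT_symm_apply (Ψ : ZMod n → E) (t : Fin n) :
    (finDFT n E).symm Ψ t = (n : ℂ)⁻¹ • ∑ k, stdAddChar (k * finEquiv n t) • Ψ k := by
  simp [finDFT, invDFT_apply]

end FinDFT

section TProduct

variable {n3 : ℕ} [NeZero n3] {l m p : ℕ}

theorem tProd_apply (A : Fin n3 → Matrix (Fin l) (Fin m) ℂ) (B : Fin n3 → Matrix (Fin m) (Fin p) ℂ)
    (t : Fin n3) : tProd A B t = ∑ q, A (t - q) * B q := by
  ext i j
  simp only [tProd, Matrix.mul_apply, Fintype.sum_prod_type, Matrix.sum_apply]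
  rfl

theorem finDFT_tProd (A : Fin n3 → Matrix (Fin l) (Fin m) ℂ)
    (B : Fin n3 → Matrix (Fin m) (Fin p) ℂ) (k : ZMod n3) :
    finDFT n3 _ (tProd A B) k = finDFT n3 _ A k * finDFT n3 _ B k := by
  simp only [finDFT_apply, tProd_apply, Finset.smul_sum, Matrix.sum_mul, Matrix.mul_sum,
    Matrix.smul_mul, Matrix.mul_smul, smul_smul]
  rw [Finset.sum_comm]
  refine Finset.sum_congr rfl fun q _ =>
    Fintype.sum_equiv (Equiv.subRight (q : Fin n3)) _ _ fun t => ?_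
  rw [Equiv.subRight_apply, ← AddChar.map_add_eq_mul, map_sub]
  ring_nf

theorem finDFT_tTrans (A : Fin n3 → Matrix (Fin l) (Fin m) ℂ) (k : ZMod n3) :
    finDFT n3 _ (tTrans A) k = (finDFT n3 _ A k)ᴴ := by
  simp only [finDFT_apply, tTrans, Matrix.conjTranspose_sum, Matrix.conjTranspose_smul]
  refine Fintype.sum_equiv (Equiv.neg _) _ _ fun t => ?_
  rw [Equiv.neg_apply, Complex.star_def, ← AddChar.map_neg_eq_conj, map_neg (finEquiv n3)]
  ring_nf

theorem finDFT_idTensor (n : ℕ) (k : ZMod n3) : finDFT n3 _ (idTensor n n3) k = 1 := by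
  simp [finDFT_apply, idTensor]

theorem tProd_tTrans_eq_idTensor_iff (Q : Fin n3 → Matrix (Fin m) (Fin m) ℂ) :
    (tProd Q (tTrans Q) = idTensor m n3 ∧ tProd (tTrans Q) Q = idTensor m n3) ↔
      ∀ k, finDFT n3 _ Q k ∈ Matrix.unitaryGroup (Fin m) ℂ := by
  simp only [← (finDFT n3 _).injective.eq_iff, funext_iff, finDFT_tProd, finDFT_tTrans,
    finDFT_idTensor, Unitary.mem_iff, Matrix.star_eq_conjTranspose, forall_and]
  exact and_comm

theorem finDFT_symm_apply_eq_zero {Ψ : ZMod n3 → Matrix (Fin l) (Fin m) ℂ} {i : Fin l} {j : Fin m}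
    (h : ∀ k, Ψ k i j = 0) (t : Fin n3) : (finDFT n3 _).symm Ψ t i j = 0 := by
  simp [finDFT_symm_apply, Matrix.sum_apply, h]

end TProduct

/-- every tensor admits a t-SVD A = U * S * Vᵀ with U, V
orthogonal tensors and S f-diagonal. -/
theorem exists_tSVD (n1 n2 n3 : ℕ) [NeZero n3]
    (A : Fin n3 → Matrix (Fin n1) (Fin n2) ℂ) :
    ∃ (U : Fin n3 → Matrix (Fin n1) (Fin n1) ℂ)
      (S : Fin n3 → Matrix (Fin n1) (Fin n2) ℂ)
      (V : Fin n3 → Matrix (Fin n2) (Fin n2) ℂ),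
      (tProd U (tTrans U) = idTensor n1 n3 ∧ tProd (tTrans U) U = idTensor n1 n3) ∧
      (tProd V (tTrans V) = idTensor n2 n3 ∧ tProd (tTrans V) V = idTensor n2 n3) ∧
      (∀ (i : Fin n3) (a : Fin n1) (b : Fin n2), (a : ℕ) ≠ (b : ℕ) → S i a b = 0) ∧
      A = tProd U (tProd S (tTrans V)) := by
  choose U S V hU hV hS hA using fun k => Matrix.exists_svd (finDFT n3 _ A k)
  refine ⟨(finDFT n3 _).symm U, (finDFT n3 _).symm S, (finDFT n3 _).symm V,
    (tProd_tTrans_eq_idTensor_iff _).mpr (by simpa using hU),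
    (tProd_tTrans_eq_idTensor_iff _).mpr (by simpa using hV),
    fun t a b hab => finDFT_symm_apply_eq_zero (fun k => hS k a b hab) t, ?_⟩
  refine (finDFT n3 _).injective (funext fun k => ?_)
  simp [finDFT_tProd, finDFT_tTrans, hA, Matrix.mul_assoc]
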